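/- If m ≥ 12 is a highly composite number with largest prime factor q and exponent β of 2 in m, then 2^β < 8 q^2. -/

import Mathlib

/-!
Suppose `2^β ≥ 8 q²`. By Bertrand's postulate there is a prime `p` with `q < p ≤ 2q`; it does not
divide `m`. Let `2^k` be the least power of two exceeding `p`, so `2^k ≤ 2p ≤ 4q` and hence
`2k ≤ β + 1`. Replacing the factor `2^k` of `m` by `p` gives a smaller number whose divisor
count has the factor `2(β - k + 1) ≥ β + 1` in place of `β + 1`, contradicting that `m` is
highly composite.
-/

/-- `d n`: number of positive divisors of `n`. -/
def d (n : ℕ) : ℕ := (Nat.divisors n).card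

/-- A positive integer `n` is highly composite if every smaller positive
integer has strictly fewer divisors. -/
def HighlyComposite (n : ℕ) : Prop :=
  0 < n ∧ ∀ m : ℕ, 0 < m → m < n → d m < d n

lemma d_mul_of_coprime {a b : ℕ} (h : a.Coprime b) : d (a * b) = d a * d b :=
  Nat.Coprime.card_divisors_mul h

lemma d_prime_pow {p : ℕ} (hp : p.Prime) (a : ℕ) : d (p ^ a) = a + 1 := by
  simp [d, Nat.divisors_prime_pow hp]

lemma d_pos {n : ℕ} (hn : n ≠ 0) : 0 < d n :=
  Finset.card_pos.mpr ⟨1, Nat.one_mem_divisors.mpr hn⟩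

lemma d_eq_factorization_succ_mul_d_ordCompl {r m : ℕ} (hr : r.Prime) (hm : m ≠ 0) :
    d m = (m.factorization r + 1) * d (ordCompl[r] m) := by
  have hcop : (r ^ m.factorization r).Coprime (ordCompl[r] m) :=
    (Nat.coprime_ordCompl hr hm).pow_left _
  conv_lhs => rw [← Nat.ordProj_mul_ordCompl_eq_self m r]
  rw [d_mul_of_coprime hcop, d_prime_pow hr]

/-- Replacing `r^k` by `p` gives a smaller number whose divisor count has the factor
`2(a - k + 1)` in place of `a + 1`. -/
theorem HighlyComposite.factorization_succ_lt_two_mul {m r p k : ℕ} (hm : HighlyComposite m)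
    (hr : r.Prime) (hp : p.Prime) (hpm : ¬ p ∣ m) (hk : k ≤ m.factorization r)
    (hpk : p < r ^ k) : m.factorization r + 1 < 2 * k := by
  set a := m.factorization r
  set D := ordCompl[r] m
  have hm0 : m ≠ 0 := hm.1.ne'
  have hD0 : D ≠ 0 := (Nat.ordCompl_pos r hm0).ne'
  have hk0 : k ≠ 0 := by
    rintro rfl
    simp only [pow_zero] at hpk
    exact hp.one_lt.not_gt hpk
  have hrm : r ∣ m := (hr.dvd_iff_one_le_factorization hm0).mpr (by omega)
  have hpr : p ≠ r := by rintro rfl; exact hpm hrm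
  have hpD : p.Coprime D :=
    (Nat.Prime.coprime_iff_not_dvd hp).mpr fun h => hpm (h.trans (Nat.ordCompl_dvd m r))
  have hrD : r.Coprime (D * p) :=
    (Nat.coprime_ordCompl hr hm0).mul_right ((Nat.coprime_primes hr hp).mpr hpr.symm)
  set m' := r ^ (a - k) * (D * p)
  have hm'_lt : m' < m := by
    calc m' < r ^ (a - k) * (D * r ^ k) :=
          Nat.mul_lt_mul_of_pos_left (Nat.mul_lt_mul_of_pos_left hpk (Nat.pos_of_ne_zero hD0))
            (pow_pos hr.pos _)
      _ = r ^ (a - k + k) * D := by ring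
      _ = m := by rw [Nat.sub_add_cancel hk]; exact Nat.ordProj_mul_ordCompl_eq_self m r
  have hd_m' : d m' = (a - k + 1) * (d D * 2) := by
    rw [d_mul_of_coprime (hrD.pow_left _), d_mul_of_coprime hpD.symm, d_prime_pow hr,
      show d p = 2 by simpa using d_prime_pow hp 1]
  have hm'_pos : 0 < m' := mul_pos (pow_pos hr.pos _) (mul_pos (Nat.pos_of_ne_zero hD0) hp.pos)
  have hlt := hm.2 m' hm'_pos hm'_lt
  rw [hd_m', d_eq_factorization_succ_mul_d_ordCompl hr hm0] at hlt
  have : (a - k + 1) * 2 < a + 1 := by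
    nlinarith [d_pos hD0]
  omega

theorem stmt_7_general (m : ℕ) (hm : HighlyComposite m)
    (q : ℕ) (hq : q.Prime)
    (hmax : ∀ p : ℕ, p.Prime → p ∣ m → p ≤ q) :
    2 ^ (m.factorization 2) < 8 * q ^ 2 := by
  by_contra! hβ
  obtain ⟨p, hp, hqp, hp2q⟩ := Nat.exists_prime_lt_and_le_two_mul q hq.ne_zero
  have hpm : ¬ p ∣ m := fun h => (hmax p hp h).not_gt hqp
  set k := Nat.log 2 p + 1
  have hpk : p < 2 ^ k := Nat.lt_pow_succ_log_self one_lt_two p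
  have hk_le : 2 ^ k ≤ 4 * q := by
    have := Nat.pow_log_le_self 2 hp.ne_zero
    rw [pow_succ]
    omega
  have hk_β : k ≤ m.factorization 2 := by
    refine (Nat.pow_le_pow_iff_right one_lt_two).mp ?_
    nlinarith [hq.two_le]
  have h2k : 2 * k ≤ m.factorization 2 + 1 := by
    refine (Nat.pow_le_pow_iff_right one_lt_two).mp ?_
    calc 2 ^ (2 * k) = (2 ^ k) ^ 2 := by ring
      _ ≤ (4 * q) ^ 2 := by gcongr
      _ = 2 * (8 * q ^ 2) := by ring
      _ ≤ 2 * 2 ^ m.factorization 2 := Nat.mul_le_mul_left 2 hβ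
      _ = 2 ^ (m.factorization 2 + 1) := by ring
  have := hm.factorization_succ_lt_two_mul Nat.prime_two hp hpm hk_β hpk
  omega

/-- If m ≥ 12 is highly composite with largest prime factor q and
2-exponent β, then 2^β < 8 q². -/
theorem stmt_7 (m : ℕ) (h12 : 12 ≤ m) (hm : HighlyComposite m)
    (q : ℕ) (hq : q.Prime) (hqdvd : q ∣ m)
    (hmax : ∀ p : ℕ, p.Prime → p ∣ m → p ≤ q) :
    2 ^ (m.factorization 2) < 8 * q ^ 2 :=
  stmt_7_general m hm q hq hmax
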